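/- arXiv:0912.2202 — 4 statements merged into one kernel-verified Lean document; each statement's English description precedes it below -/
import Mathlib

section
/- Let $G:[0,\infty)\to(0,1]$ be a non-increasing function, and let $c>1$, $\delta>0$ be constants such that for every $s\geq 0$ one has $G\big(s + c\,G(s)^{-1/\delta}\big) \leq \frac{c}{1+c}\,G(s)$. Then, setting $c_1 = \left(\frac{1+c}{c}\right)^{1/\delta} - 1 > 0$, one has for all $s>0$: $G(s) \leq \left(\frac{c(1+c_1)}{c_1}\right)^{\delta} \frac{1}{s^{\delta}}$. -/
/-!
Write `H = G ^ (-1/δ)`: the hypothesis says that jumping from `s` to `s + c H(s)` multiplies `H`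
by at least `κ = ((1 + c)/c) ^ (1/δ) > 1`, and `κ - 1` is the paper's `c₁`. Along the jump times
`u₀ = 0`, `u_{n+1} = u_n + c H(u_n)` the jumps grow geometrically, so the elapsed time is at most
`c/(κ - 1) · H(u_n)`; the jump times are unbounded because `H ≥ H(0) > 0` by monotonicity. For `s > 0` take the last jump time `u_m ≤ s`: then
`s < u_{m+1} ≤ cκ/(κ - 1) · H(u_m)`, and `G(s) ≤ G(u_m) = H(u_m) ^ (-δ)` gives the bound.
-/

open Real

theorem exists_le_lt_succ_of_lt {α : Type*} [LinearOrder α] {u : ℕ → α} {s : α}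
    (h0 : u 0 ≤ s) : ∀ {n : ℕ}, s < u n → ∃ m, u m ≤ s ∧ s < u (m + 1)
  | 0, h => absurd h0 (not_le.2 h)
  | n + 1, h => by
    by_cases hn : u n ≤ s
    · exact ⟨n, hn, h⟩
    · exact exists_le_lt_succ_of_lt h0 (not_le.1 hn)

def jumpSeq (c : ℝ) (H : ℝ → ℝ) (n : ℕ) : ℝ :=
  (fun t ↦ t + c * H t)^[n] 0

namespace jumpSeq

variable {c κ : ℝ} {H : ℝ → ℝ}

@[simp]
theorem zero : jumpSeq c H 0 = 0 := rfl

theorem succ (n : ℕ) : jumpSeq c H (n + 1) = jumpSeq c H n + c * H (jumpSeq c H n) :=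
  Function.iterate_succ_apply' _ _ _

theorem mul_natCast_le (hc : 0 ≤ c) (hH0 : 0 ≤ H 0) (hH : ∀ t, 0 ≤ t → H 0 ≤ H t) (n : ℕ) :
    c * H 0 * n ≤ jumpSeq c H n := by
  induction n with
  | zero => simp
  | succ n ih =>
    have : c * H 0 ≤ c * H (jumpSeq c H n) :=
      mul_le_mul_of_nonneg_left (hH _ (le_trans (by positivity) ih)) hc
    push_cast
    linarith [succ (c := c) (H := H) n]

theorem nonneg (hc : 0 ≤ c) (hH0 : 0 ≤ H 0) (hH : ∀ t, 0 ≤ t → H 0 ≤ H t) (n : ℕ) :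
    0 ≤ jumpSeq c H n :=
  le_trans (by positivity) (mul_natCast_le hc hH0 hH n)

theorem le_mul (hc : 0 ≤ c) (hH0 : 0 ≤ H 0) (hH : ∀ t, 0 ≤ t → H 0 ≤ H t) (hκ : 1 < κ)
    (hexp : ∀ t, 0 ≤ t → κ * H t ≤ H (t + c * H t)) (n : ℕ) :
    jumpSeq c H n ≤ c / (κ - 1) * H (jumpSeq c H n) := by
  induction n with
  | zero => simpa using mul_nonneg (div_nonneg hc (sub_nonneg.2 hκ.le)) hH0
  | succ n ih =>
    set u := jumpSeq c H n
    have hκ' : κ - 1 ≠ 0 := sub_ne_zero.2 hκ.ne'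
    rw [succ]
    calc u + c * H u ≤ c / (κ - 1) * H u + c * H u := by linarith
      _ = c / (κ - 1) * (κ * H u) := by field_simp; ring
      _ ≤ c / (κ - 1) * H (u + c * H u) :=
        mul_le_mul_of_nonneg_left (hexp u (nonneg hc hH0 hH n))
          (div_nonneg hc (sub_nonneg.2 hκ.le))

end jumpSeq

theorem exists_lt_mul_of_expanding {c κ s : ℝ} {H : ℝ → ℝ} (hc : 0 < c) (hH0 : 0 < H 0)
    (hH : ∀ t, 0 ≤ t → H 0 ≤ H t) (hκ : 1 < κ)
    (hexp : ∀ t, 0 ≤ t → κ * H t ≤ H (t + c * H t)) (hs : 0 ≤ s) :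
    ∃ t, 0 ≤ t ∧ t ≤ s ∧ s < c * κ / (κ - 1) * H t := by
  obtain ⟨n, hn⟩ := exists_nat_gt (s / (c * H 0))
  have hsn : s < jumpSeq c H n := by
    rw [div_lt_iff₀ (by positivity)] at hn
    linarith [jumpSeq.mul_natCast_le hc.le hH0.le hH n]
  obtain ⟨m, hms, hsm⟩ := exists_le_lt_succ_of_lt (by simpa using hs) hsn
  refine ⟨_, jumpSeq.nonneg hc.le hH0.le hH m, hms, ?_⟩
  have hκ' : κ - 1 ≠ 0 := sub_ne_zero.2 hκ.ne'
  calc s < jumpSeq c H m + c * H (jumpSeq c H m) := jumpSeq.succ (c := c) m ▸ hsm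
    _ ≤ c / (κ - 1) * H (jumpSeq c H m) + c * H (jumpSeq c H m) := by
      linarith [jumpSeq.le_mul hc.le hH0.le hH hκ hexp m]
    _ = c * κ / (κ - 1) * H (jumpSeq c H m) := by field_simp; ring

theorem le_div_rpow_of_lt_mul_rpow_neg_inv {g s A δ : ℝ} (hg : 0 < g) (hs : 0 < s) (hδ : 0 < δ)
    (h : s < A * g ^ (-(1 / δ))) : g ≤ A ^ δ / s ^ δ := by
  have hA : 0 < A := pos_of_mul_pos_left (hs.trans h) (rpow_pos_of_pos hg _).le
  have hpow : (A * g ^ (-(1 / δ))) ^ δ = A ^ δ / g := by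
    rw [mul_rpow hA.le (rpow_nonneg hg.le _), ← rpow_mul hg.le, neg_mul, one_div_mul_cancel hδ.ne',
      rpow_neg_one, div_eq_mul_inv]
  have := rpow_lt_rpow hs.le h hδ
  rw [hpow, lt_div_iff₀ hg] at this
  rw [le_div_iff₀ (rpow_pos_of_pos hs δ)]
  linarith

theorem inv_rpow_mul_rpow_neg_le_rpow_neg {q g g' p : ℝ} (hq : 0 < q) (hg : 0 < g) (hg' : 0 < g')
    (hp : 0 ≤ p) (h : g' ≤ q * g) : q⁻¹ ^ p * g ^ (-p) ≤ g' ^ (-p) :=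
  calc q⁻¹ ^ p * g ^ (-p) = (q * g) ^ (-p) := by
        rw [mul_rpow hq.le hg.le, rpow_neg hq.le, inv_rpow hq.le]
    _ ≤ g' ^ (-p) := rpow_le_rpow_of_nonpos hg' h (neg_nonpos.2 hp)

theorem stmt_0_general (G : ℝ → ℝ) (c δ : ℝ) (hc : 1 < c) (hδ : 0 < δ)
    (hGpos : ∀ s : ℝ, 0 ≤ s → 0 < G s)
    (hmono : ∀ s t : ℝ, 0 ≤ s → s ≤ t → G t ≤ G s)
    (hstep : ∀ s : ℝ, 0 ≤ s →
      G (s + c * (G s) ^ (-(1 / δ)) ) ≤ c / (1 + c) * G s) :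
    ∀ s : ℝ, 0 < s →
      G s ≤ (c * (1 + (((1 + c) / c) ^ (1 / δ) - 1)) / (((1 + c) / c) ^ (1 / δ) - 1)) ^ δ
        / s ^ δ := by
  intro s hs
  have hc0 : 0 < c := one_pos.trans hc
  set κ := ((1 + c) / c) ^ (1 / δ)
  have hκ : 1 < κ := one_lt_rpow ((one_lt_div hc0).2 (by linarith)) (by positivity)
  have hHmono : ∀ t, 0 ≤ t → G 0 ^ (-(1 / δ)) ≤ G t ^ (-(1 / δ)) := fun t ht ↦
    rpow_le_rpow_of_nonpos (hGpos t ht) (hmono 0 t le_rfl ht) (by simp [hδ.le])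
  have hexp : ∀ t, 0 ≤ t → κ * G t ^ (-(1 / δ)) ≤ (G (t + c * G t ^ (-(1 / δ)))) ^ (-(1 / δ)) := by
    intro t ht
    have hnext : 0 ≤ t + c * G t ^ (-(1 / δ)) := by
      have := rpow_nonneg (hGpos t ht).le (-(1 / δ)); positivity
    simpa only [inv_div] using inv_rpow_mul_rpow_neg_le_rpow_neg (by positivity) (hGpos t ht)
      (hGpos _ hnext) (by positivity) (hstep t ht)
  obtain ⟨t, ht0, hts, hst⟩ := exists_lt_mul_of_expanding (H := fun t ↦ G t ^ (-(1 / δ))) hc0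
    (rpow_pos_of_pos (hGpos 0 le_rfl) _) hHmono hκ hexp hs.le
  rw [add_sub_cancel]
  exact (hmono t s ht0 hts).trans
    (le_div_rpow_of_lt_mul_rpow_neg_inv (hGpos t ht0) hs hδ hst)

theorem stmt_0 (G : ℝ → ℝ) (c δ : ℝ) (hc : 1 < c) (hδ : 0 < δ)
    (hGpos : ∀ s : ℝ, 0 ≤ s → 0 < G s) (hGle1 : ∀ s : ℝ, 0 ≤ s → G s ≤ 1)
    (hmono : ∀ s t : ℝ, 0 ≤ s → s ≤ t → G t ≤ G s)
    (hstep : ∀ s : ℝ, 0 ≤ s →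
      G (s + c * (G s) ^ (-(1 / δ)) ) ≤ c / (1 + c) * G s) :
    ∀ s : ℝ, 0 < s →
      G s ≤ (c * (1 + (((1 + c) / c) ^ (1 / δ) - 1)) / (((1 + c) / c) ^ (1 / δ) - 1)) ^ δ
        / s ^ δ :=
  stmt_0_general G c δ hc hδ hGpos hmono hstep
end

section
/- Let $(d_j)_{j\geq -1}$ be a non-increasing sequence of positive reals with $d_{-1} \leq M$ for some $M>0$, and let $C>0$, $\beta\in(0,1)$ be such that for every integer $0 \leq j \leq 2N$ (where $N\geq 1$ is an integer), $d_j \leq C \exp\big((C M / d_{2N})^{1/(2\beta)}\big)\,[d_{j-1} - d_j]$. Then there exists a constant $C'>0$ depending only on $C$ and $\beta$ (not on $N$ or the sequence) such that $d_{2N} \leq \frac{C'}{[\ln(1+2N)]^{2\beta}} M$. -/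
theorem stmt_4 (C β : ℝ) (hC : 0 < C) (hβ0 : 0 < β) (hβ1 : β < 1) :
    ∃ C' > 0, ∀ (N : ℕ), 1 ≤ N → ∀ (d : ℤ → ℝ) (M : ℝ), 0 < M →
      (∀ j : ℤ, -1 ≤ j → 0 < d j) →
      (∀ j : ℤ, -1 ≤ j → d (j + 1) ≤ d j) →
      d (-1) ≤ M →
      (∀ j : ℤ, 0 ≤ j → j ≤ 2 * N →
        d j ≤ C * Real.exp ((C * M / d (2 * N)) ^ (1 / (2 * β))) * (d (j - 1) - d j)) →
      d (2 * N) ≤ C' / (Real.log (1 + 2 * N)) ^ (2 * β) * M := by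
  refine ⟨9 * C + 1, by positivity, ?_⟩
  intro N hN d M hM hpos hmono hdM hrec
  set D := d (2 * N) with hDdef
  have h2N : (-1 : ℤ) ≤ 2 * N := by
    have := Int.natCast_nonneg N; linarith
  have hDpos : 0 < D := hpos _ h2N
  set x := (C * M / D) ^ (1 / (2 * β)) with hxdef
  have hbase : 0 < C * M / D := by positivity
  have hxpos : 0 < x := Real.rpow_pos_of_pos hbase _
  have hxpow : x ^ (2 * β) = C * M / D := by
    rw [hxdef, ← Real.rpow_mul hbase.le]
    rw [show (1 / (2 * β)) * (2 * β) = 1 by field_simp]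
    · exact Real.rpow_one _
  -- monotonicity
  have key : ∀ (n : ℕ) (i : ℤ), -1 ≤ i → d (i + n) ≤ d i := by
    intro n
    induction n with
    | zero => simp
    | succ k ih =>
      intro i hi
      have h1 : d (i + (k : ℤ) + 1) ≤ d (i + k) :=
        hmono _ (by linarith [Int.natCast_nonneg k])
      have := ih i hi
      calc d (i + ((k : ℕ) + 1 : ℕ)) = d (i + (k : ℤ) + 1) := by push_cast; ring_nf
        _ ≤ d (i + k) := h1
        _ ≤ d i := this
  have hge : ∀ k : ℤ, -1 ≤ k → k ≤ 2 * N → D ≤ d k := by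
    intro k hk1 hk2
    have : d (k + ((2 * N - k).toNat : ℤ)) ≤ d k := key _ k hk1
    rwa [Int.toNat_of_nonneg (by linarith), show k + (2 * N - k) = 2 * N by ring] at this
  set E := C * Real.exp x with hEdef
  have hEpos : 0 < E := by positivity
  -- summation
  have t1 : ((2 * N + 1 : ℕ) : ℝ) * D ≤ ∑ k ∈ Finset.range (2 * N + 1), d (k : ℤ) := by
    calc ((2 * N + 1 : ℕ) : ℝ) * D = ∑ _k ∈ Finset.range (2 * N + 1), D := by
          rw [Finset.sum_const]; simp [mul_comm]
      _ ≤ _ := Finset.sum_le_sum (fun k hk => by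
          refine hge k (le_trans (by norm_num) (Int.natCast_nonneg k)) ?_
          have := Finset.mem_range.mp hk
          exact_mod_cast Nat.lt_succ_iff.mp this)
  have t2 : ∑ k ∈ Finset.range (2 * N + 1), d (k : ℤ) ≤ E * (d (-1) - D) := by
    have tele : ∑ k ∈ Finset.range (2 * N + 1), (d ((k : ℤ) - 1) - d (k : ℤ))
        = d (-1) - D := by
      have := Finset.sum_range_sub' (f := fun k : ℕ => d ((k : ℤ) - 1)) (n := 2 * N + 1)
      calc ∑ k ∈ Finset.range (2 * N + 1), (d ((k : ℤ) - 1) - d (k : ℤ))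
          = ∑ k ∈ Finset.range (2 * N + 1),
              (d ((k : ℤ) - 1) - d (((k + 1 : ℕ) : ℤ) - 1)) := by
            apply Finset.sum_congr rfl
            intro k _
            congr 2
            push_cast; ring
        _ = d (((0 : ℕ) : ℤ) - 1) - d (((2 * N + 1 : ℕ) : ℤ) - 1) := this
        _ = d (-1) - D := by
            norm_num [hDdef, show ((2 * N + 1 : ℕ) : ℤ) - 1 = 2 * (N : ℤ) by push_cast; ring]
    calc ∑ k ∈ Finset.range (2 * N + 1), d (k : ℤ)
        ≤ ∑ k ∈ Finset.range (2 * N + 1), E * (d ((k : ℤ) - 1) - d (k : ℤ)) := by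
          refine Finset.sum_le_sum (fun k hk => ?_)
          refine hrec k (Int.natCast_nonneg k) ?_
          exact_mod_cast Nat.lt_succ_iff.mp (Finset.mem_range.mp hk)
      _ = E * ∑ k ∈ Finset.range (2 * N + 1), (d ((k : ℤ) - 1) - d (k : ℤ)) := by
          rw [Finset.mul_sum]
      _ = E * (d (-1) - D) := by rw [tele]
  have hsum : ((2 * N + 1 : ℕ) : ℝ) * D ≤ E * M := by
    calc ((2 * N + 1 : ℕ) : ℝ) * D ≤ E * (d (-1) - D) := le_trans t1 t2
      _ ≤ E * M := by nlinarith
  -- 2N+1 ≤ e^x * x^(2β)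
  have hkey : ((2 * N + 1 : ℕ) : ℝ) ≤ Real.exp x * x ^ (2 * β) := by
    have : E * M = Real.exp x * x ^ (2 * β) * D := by
      rw [hxpow, hEdef]; field_simp
    rw [this] at hsum
    exact le_of_mul_le_mul_right (by linarith [hsum]) hDpos
  have h3 : (3 : ℝ) ≤ ((2 * N + 1 : ℕ) : ℝ) := by
    have : 3 ≤ 2 * N + 1 := by omega
    exact_mod_cast this
  -- x ≥ 1
  have hx1 : 1 ≤ x := by
    by_contra h
    push_neg at h
    have h1 : x ^ (2 * β) ≤ 1 := by
      calc x ^ (2 * β) ≤ 1 ^ (2 * β) :=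
            Real.rpow_le_rpow hxpos.le h.le (by positivity)
        _ = 1 := Real.one_rpow _
    have h2 : Real.exp x ≤ Real.exp 1 := Real.exp_le_exp.mpr h.le
    have h4 : Real.exp 1 < 3 := by
      have := Real.exp_one_lt_d9; linarith
    nlinarith [Real.exp_pos x]
  -- 2N+1 ≤ e^(3x)
  have hbig : ((2 * N + 1 : ℕ) : ℝ) ≤ Real.exp (3 * x) := by
    have hx2 : x ^ (2 * β) ≤ x ^ (2 : ℝ) :=
      Real.rpow_le_rpow_of_exponent_le hx1 (by linarith)
    have hxe : x ≤ Real.exp x := (Real.add_one_le_exp x).trans' (by linarith)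
    have hx3 : x ^ (2 : ℝ) ≤ Real.exp x * Real.exp x := by
      have h2 : x ^ (2 : ℝ) = x * x := by
        rw [show (2 : ℝ) = ((2 : ℕ) : ℝ) by norm_num, Real.rpow_natCast]; ring
      rw [h2]
      exact mul_le_mul hxe hxe hxpos.le (Real.exp_pos x).le
    calc ((2 * N + 1 : ℕ) : ℝ) ≤ Real.exp x * x ^ (2 * β) := hkey
      _ ≤ Real.exp x * (Real.exp x * Real.exp x) := by
          nlinarith [Real.exp_pos x, Real.rpow_pos_of_pos hxpos (2 * β)]
      _ = Real.exp (3 * x) := by rw [← Real.exp_add, ← Real.exp_add]; ring_nf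
  set L := Real.log (1 + 2 * (N : ℝ)) with hLdef
  have hcast : (1 + 2 * (N : ℝ)) = ((2 * N + 1 : ℕ) : ℝ) := by push_cast; ring
  have hLx : L ≤ 3 * x := by
    rw [hLdef, hcast]
    calc Real.log ((2 * N + 1 : ℕ) : ℝ) ≤ Real.log (Real.exp (3 * x)) :=
          Real.log_le_log (by linarith) hbig
      _ = 3 * x := Real.log_exp _
  have hLpos : 0 < L := by
    rw [hLdef]
    apply Real.log_pos
    have : (1 : ℝ) ≤ (N : ℝ) := by exact_mod_cast hN
    linarith
  have hLpow : 0 < L ^ (2 * β) := Real.rpow_pos_of_pos hLpos _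
  -- L^(2β) ≤ 9 * x^(2β)
  have hfin : L ^ (2 * β) ≤ 9 * x ^ (2 * β) := by
    calc L ^ (2 * β) ≤ (3 * x) ^ (2 * β) :=
          Real.rpow_le_rpow hLpos.le hLx (by positivity)
      _ = 3 ^ (2 * β) * x ^ (2 * β) := Real.mul_rpow (by norm_num) hxpos.le
      _ ≤ 9 * x ^ (2 * β) := by
          have h9 : (3 : ℝ) ^ (2 * β) ≤ 3 ^ (2 : ℝ) :=
            Real.rpow_le_rpow_of_exponent_le (by norm_num) (by linarith)
          have : (3 : ℝ) ^ (2 : ℝ) = 9 := by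
            rw [show (2 : ℝ) = ((2 : ℕ) : ℝ) by norm_num, Real.rpow_natCast]; norm_num
          nlinarith [Real.rpow_pos_of_pos hxpos (2 * β)]
  -- finish: D = C*M / x^(2β)
  have hD : D = C * M / x ^ (2 * β) := by
    rw [hxpow]; field_simp
  rw [hD]
  have hxp : 0 < x ^ (2 * β) := Real.rpow_pos_of_pos hxpos _
  rw [div_mul_eq_mul_div, div_le_div_iff₀ hxp hLpow]
  nlinarith [mul_le_mul_of_nonneg_left hfin (le_of_lt (mul_pos hC hM))]
end

section
/- Let $H:(0,R_0)\to(0,\infty)$ be differentiable and suppose there exists a non-decreasing function $\Phi:(0,R_0)\to[0,\infty)$ and $N\geq 1$ such that $\frac{d}{dr}\ln H(r) = \frac{1}{r}(N+1+\Phi(r))$ for all $r \in (0,R_0)$. Then for any $0 < r_1 < r_2 < r_3 < R_0$, $H(r_2) \leq H(r_1)^{\alpha} H(r_3)^{1-\alpha}$ with $\alpha = \frac{1}{\ln(r_2/r_1)}\left(\frac{1}{\ln(r_2/r_1)} + \frac{1}{\ln(r_3/r_2)}\right)^{-1}$. -/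
/-!
In the variable `t = log r` the hypothesis says that `t ↦ log H (exp t)` has the non-decreasing
derivative `N + 1 + Φ (exp t)`, so it is convex. The three-radii inequality is the convexity
inequality at `log r₁ < log r₂ < log r₃`, read through adjacent secant slopes and exponentiated.
-/

open Real Set

theorem hasDerivAt_comp_exp_of_hasDerivAt_div {f ψ : ℝ → ℝ} {t : ℝ}
    (hf : HasDerivAt f (ψ (exp t) / exp t) (exp t)) : HasDerivAt (f ∘ exp) (ψ (exp t)) t := by
  simpa [div_mul_cancel₀ _ (exp_ne_zero t)] using hf.comp t (hasDerivAt_exp t)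

theorem convexOn_comp_exp_of_hasDerivAt_div {f ψ : ℝ → ℝ} {a b : ℝ}
    (hf : ∀ r ∈ Ioo a b, HasDerivAt f (ψ r / r) r) (hψ : MonotoneOn ψ (Ioo a b)) :
    ConvexOn ℝ (exp ⁻¹' Ioo a b) (f ∘ exp) := by
  have hopen : IsOpen (exp ⁻¹' Ioo a b) := isOpen_Ioo.preimage continuous_exp
  have hderiv : ∀ t ∈ exp ⁻¹' Ioo a b, HasDerivAt (f ∘ exp) (ψ (exp t)) t :=
    fun t ht => hasDerivAt_comp_exp_of_hasDerivAt_div (hf _ ht)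
  refine MonotoneOn.convexOn_of_deriv (ordConnected_Ioo.preimage_mono exp_monotone).convex
    (fun t ht => (hderiv t ht).continuousAt.continuousWithinAt) ?_ ?_ <;> rw [hopen.interior_eq]
  · exact fun t ht => (hderiv t ht).differentiableAt.differentiableWithinAt
  · intro s hs t ht hst
    rw [(hderiv s hs).deriv, (hderiv t ht).deriv]
    exact hψ hs ht (exp_le_exp.2 hst)

theorem le_weighted_add_of_div_le_div {A B L₁ L₂ L₃ : ℝ} (hA : 0 < A) (hB : 0 < B)
    (h : (L₂ - L₁) / A ≤ (L₃ - L₂) / B) :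
    L₂ ≤ 1 / A * (1 / A + 1 / B)⁻¹ * L₁ + (1 - 1 / A * (1 / A + 1 / B)⁻¹) * L₃ := by
  have hAB : 0 < A + B := add_pos hA hB
  have hα : 1 / A * (1 / A + 1 / B)⁻¹ = B / (A + B) := by field_simp; ring
  rw [div_le_div_iff₀ hA hB] at h
  rw [hα, div_mul_eq_mul_div, one_sub_div hAB.ne', div_mul_eq_mul_div, ← add_div,
    le_div_iff₀ hAB]
  linarith

theorem stmt_9_general (R₀ : ℝ) (H Φ : ℝ → ℝ) (N : ℕ)
    (hHpos : ∀ r ∈ Set.Ioo (0 : ℝ) R₀, 0 < H r)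
    (hΦmono : MonotoneOn Φ (Set.Ioo 0 R₀))
    (hderiv : ∀ r ∈ Set.Ioo (0 : ℝ) R₀,
      HasDerivAt (fun ρ => Real.log (H ρ)) (((N : ℝ) + 1 + Φ r) / r) r)
    (r₁ r₂ r₃ α : ℝ) (h1 : 0 < r₁) (h12 : r₁ < r₂) (h23 : r₂ < r₃) (h3 : r₃ < R₀)
    (hα : α = (1 / Real.log (r₂ / r₁)) *
      (1 / Real.log (r₂ / r₁) + 1 / Real.log (r₃ / r₂))⁻¹) :
    H r₂ ≤ H r₁ ^ α * H r₃ ^ (1 - α) := by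
  have h2 : 0 < r₂ := h1.trans h12
  have h3' : 0 < r₃ := h2.trans h23
  have hr₁ : r₁ ∈ Ioo 0 R₀ := ⟨h1, h12.trans (h23.trans h3)⟩
  have hr₂ : r₂ ∈ Ioo 0 R₀ := ⟨h2, h23.trans h3⟩
  have hr₃ : r₃ ∈ Ioo 0 R₀ := ⟨h3', h3⟩
  have hconv := convexOn_comp_exp_of_hasDerivAt_div hderiv (hΦmono.const_add ((N : ℝ) + 1))
  have hslope := hconv.slope_mono_adjacent (x := log r₁) (y := log r₂) (z := log r₃)
    (by simpa [exp_log h1] using hr₁) (by simpa [exp_log h3'] using hr₃)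
    (log_lt_log h1 h12) (log_lt_log h2 h23)
  simp only [Function.comp_apply, exp_log h1, exp_log h2, exp_log h3'] at hslope
  rw [← log_div h2.ne' h1.ne', ← log_div h3'.ne' h2.ne'] at hslope
  have hlog := le_weighted_add_of_div_le_div (log_pos ((one_lt_div h1).2 h12))
    (log_pos ((one_lt_div h2).2 h23)) hslope
  rw [← hα] at hlog
  calc H r₂ = exp (log (H r₂)) := (exp_log (hHpos r₂ hr₂)).symm
    _ ≤ exp (log (H r₁) * α + log (H r₃) * (1 - α)) := exp_le_exp.2 (by linarith)
    _ = H r₁ ^ α * H r₃ ^ (1 - α) := by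
      rw [exp_add, rpow_def_of_pos (hHpos r₁ hr₁), rpow_def_of_pos (hHpos r₃ hr₃)]

theorem stmt_9 (R₀ : ℝ) (H Φ : ℝ → ℝ) (N : ℕ) (hN : 1 ≤ N)
    (hHpos : ∀ r ∈ Set.Ioo (0 : ℝ) R₀, 0 < H r)
    (hΦnn : ∀ r ∈ Set.Ioo (0 : ℝ) R₀, 0 ≤ Φ r)
    (hΦmono : MonotoneOn Φ (Set.Ioo 0 R₀))
    (hderiv : ∀ r ∈ Set.Ioo (0 : ℝ) R₀,
      HasDerivAt (fun ρ => Real.log (H ρ)) (((N : ℝ) + 1 + Φ r) / r) r)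
    (r₁ r₂ r₃ α : ℝ) (h1 : 0 < r₁) (h12 : r₁ < r₂) (h23 : r₂ < r₃) (h3 : r₃ < R₀)
    (hα : α = (1 / Real.log (r₂ / r₁)) *
      (1 / Real.log (r₂ / r₁) + 1 / Real.log (r₃ / r₂))⁻¹) :
    H r₂ ≤ H r₁ ^ α * H r₃ ^ (1 - α) :=
  stmt_9_general R₀ H Φ N hHpos hΦmono hderiv r₁ r₂ r₃ α h1 h12 h23 h3 hα
end

section
/- Let $v \in H^2(D)$ be harmonic in a bounded open set $D$ containing $\overline{B(y_0,r)}$ for some $r > 0$. Then $\left(\int_{B(y_0,r)} |\nabla v|^2 (r^2 - |y - y_0|^2)\,dy\right)^2 \leq 4 \left(\int_{B(y_0,r)} |(y-y_0)\cdot\nabla v|^2\,dy\right) \left(\int_{B(y_0,r)} |v|^2\,dy\right)$. -/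
/-!
With `ρ(y) = r² - ‖y - y₀‖²`, which vanishes on the sphere, integrating `∂ᵢ(ρ v ∂ᵢv)` over the
ball produces no boundary term: `∫ ρ ‖∇v‖² = 2 ∫ v ⟪y - y₀, ∇v⟫ - ∫ ρ v Δv`, and `Δv = 0`.
Cauchy–Schwarz on the right-hand side gives the inequality.

The integration by parts is done on the whole space: `v` is cut off outside a slightly larger
ball, and `ρ` is extended by zero outside the ball, which keeps it Lipschitz; its line derivatives
are then known off the sphere, a null set.
-/

/-- The Laplacian of `v : ℝ^d → ℝ` at `y`. -/
noncomputable def euclideanLaplacian {d : ℕ} (v : EuclideanSpace ℝ (Fin d) → ℝ)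
    (y : EuclideanSpace ℝ (Fin d)) : ℝ :=
  ∑ i : Fin d, iteratedFDeriv ℝ 2 v y ![EuclideanSpace.single i 1, EuclideanSpace.single i 1]

open MeasureTheory Metric Set Filter
open scoped Topology RealInnerProductSpace

theorem sq_integral_mul_le_integral_sq_mul_integral_sq {α : Type*} [MeasurableSpace α]
    {μ : Measure α} {f g : α → ℝ} (hf : Integrable (fun x ↦ f x ^ 2) μ)
    (hg : Integrable (fun x ↦ g x ^ 2) μ) (hfg : Integrable (fun x ↦ f x * g x) μ) :
    (∫ x, f x * g x ∂μ) ^ 2 ≤ (∫ x, f x ^ 2 ∂μ) * ∫ x, g x ^ 2 ∂μ := by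
  have hquad : ∀ t : ℝ, 0 ≤ (∫ x, g x ^ 2 ∂μ) * (t * t) + (2 * ∫ x, f x * g x ∂μ) * t
      + ∫ x, f x ^ 2 ∂μ := fun t ↦
    calc 0 ≤ ∫ x, (f x + t * g x) ^ 2 ∂μ := integral_nonneg fun x ↦ sq_nonneg _
      _ = ∫ x, (f x ^ 2 + (2 * t * (f x * g x) + t * t * g x ^ 2)) ∂μ :=
        integral_congr_ae (ae_of_all _ fun x ↦ by ring)
      _ = _ := by
        have hcross : Integrable (fun x ↦ 2 * t * (f x * g x) + t * t * g x ^ 2) μ :=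
          (hfg.const_mul _).add (hg.const_mul _)
        rw [integral_add hf hcross, integral_add (hfg.const_mul _) (hg.const_mul _),
          integral_const_mul, integral_const_mul]
        ring
  have := discrim_le_zero hquad
  rw [discrim] at this
  linarith

theorem Continuous.integrableOn_ball {E F : Type*} [NormedAddCommGroup E] [ProperSpace E]
    [MeasurableSpace E] [OpensMeasurableSpace E] [NormedAddCommGroup F] {μ : Measure E}
    [IsFiniteMeasureOnCompacts μ] {f : E → F} (hf : Continuous f) (x : E) (r : ℝ) :
    IntegrableOn f (ball x r) μ :=
  (hf.continuousOn.integrableOn_compact (isCompact_closedBall x r)).mono_set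
    ball_subset_closedBall

section TruncatedWeight

variable {E : Type*} [NormedAddCommGroup E] {y₀ : E} {r : ℝ}

/-- `r ^ 2 - ‖y - y₀‖ ^ 2` on `ball y₀ r`, extended by zero, written so that it is visibly
Lipschitz. -/
noncomputable def truncatedWeight (y₀ : E) (r : ℝ) (y : E) : ℝ := r ^ 2 - min ‖y - y₀‖ r ^ 2

theorem truncatedWeight_eq_indicator :
    truncatedWeight y₀ r = (ball y₀ r).indicator fun y ↦ r ^ 2 - ‖y - y₀‖ ^ 2 := by
  ext y
  by_cases hy : y ∈ ball y₀ r
  · rw [indicator_of_mem hy]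
    rw [mem_ball, dist_eq_norm] at hy
    simp [truncatedWeight, hy.le]
  · rw [indicator_of_notMem hy]
    rw [mem_ball, dist_eq_norm, not_lt] at hy
    simp [truncatedWeight, hy]

theorem lipschitzWith_truncatedWeight (y₀ : E) (hr : 0 ≤ r) :
    LipschitzWith (Real.toNNReal (2 * r)) (truncatedWeight y₀ r) := by
  have hmin : LipschitzWith 1 fun y ↦ min ‖y - y₀‖ r := by
    simpa [dist_eq_norm] using (LipschitzWith.dist_left y₀).min_const r
  refine LipschitzWith.of_dist_le_mul fun x y ↦ ?_
  have hx : 0 ≤ min ‖x - y₀‖ r := le_min (norm_nonneg _) hr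
  have hy : 0 ≤ min ‖y - y₀‖ r := le_min (norm_nonneg _) hr
  have hxy : |min ‖x - y₀‖ r - min ‖y - y₀‖ r| ≤ dist x y := by
    simpa [Real.dist_eq] using hmin.dist_le_mul x y
  rw [Real.coe_toNNReal _ (by positivity), Real.dist_eq, truncatedWeight, truncatedWeight,
    show ∀ a b : ℝ, r ^ 2 - a ^ 2 - (r ^ 2 - b ^ 2) = (b + a) * -(a - b) by intros; ring,
    abs_mul, abs_neg, abs_of_nonneg (add_nonneg hy hx)]
  exact mul_le_mul (by linarith [min_le_right ‖x - y₀‖ r, min_le_right ‖y - y₀‖ r]) hxy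
    (abs_nonneg _) (by positivity)

variable [InnerProductSpace ℝ E]

theorem hasFDerivAt_sq_sub_norm_sub_sq (y₀ : E) (r : ℝ) (y : E) :
    HasFDerivAt (fun z ↦ r ^ 2 - ‖z - y₀‖ ^ 2) (-(2 • innerSL ℝ (y - y₀))) y := by
  simpa using (((hasFDerivAt_id y).sub_const y₀).norm_sq).const_sub (r ^ 2)

variable [FiniteDimensional ℝ E] [MeasurableSpace E] [BorelSpace E] (μ : Measure E)
  [μ.IsAddHaarMeasure]

theorem ae_lineDeriv_truncatedWeight (hr : r ≠ 0) (w : E) :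
    ∀ᵐ y ∂μ, lineDeriv ℝ (truncatedWeight y₀ r) y w =
      (ball y₀ r).indicator (fun y ↦ -2 * ⟪y - y₀, w⟫) y := by
  filter_upwards [measure_eq_zero_iff_ae_notMem.mp (Measure.addHaar_sphere_of_ne_zero μ y₀ hr)]
    with y hy
  rw [truncatedWeight_eq_indicator]
  by_cases hball : y ∈ ball y₀ r
  · have hloc : (ball y₀ r).indicator (fun z ↦ r ^ 2 - ‖z - y₀‖ ^ 2) =ᶠ[𝓝 y]
        fun z ↦ r ^ 2 - ‖z - y₀‖ ^ 2 :=
      eventuallyEq_of_mem (isOpen_ball.mem_nhds hball) fun z hz ↦ indicator_of_mem hz _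
    rw [hloc.lineDeriv_eq, ((hasFDerivAt_sq_sub_norm_sub_sq y₀ r y).hasLineDerivAt w).lineDeriv,
      indicator_of_mem hball]
    simp [inner_sub_left]
  · have hout : y ∉ closedBall y₀ r := by
      rw [← ball_union_sphere]
      exact fun h ↦ h.elim hball hy
    have hloc : (ball y₀ r).indicator (fun z ↦ r ^ 2 - ‖z - y₀‖ ^ 2) =ᶠ[𝓝 y] fun _ ↦ 0 :=
      eventuallyEq_of_mem (isClosed_closedBall.isOpen_compl.mem_nhds hout) fun z hz ↦
        indicator_of_notMem (fun h ↦ hz (ball_subset_closedBall h)) _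
    rw [hloc.lineDeriv_eq, ((hasFDerivAt_const (0 : ℝ) y).hasLineDerivAt w).lineDeriv,
      indicator_of_notMem hball]
    rfl

theorem setIntegral_ball_sq_sub_norm_sub_sq_mul_fderiv {P : E → ℝ} (hP : ContDiff ℝ 1 P)
    (hPc : HasCompactSupport P) (hr : 0 < r) (w : E) :
    ∫ y in ball y₀ r, (r ^ 2 - ‖y - y₀‖ ^ 2) * fderiv ℝ P y w ∂μ =
      2 * ∫ y in ball y₀ r, ⟪y - y₀, w⟫ * P y ∂μ := by
  obtain ⟨K, hPlip⟩ := hP.lipschitzWith_of_hasCompactSupport hPc one_ne_zero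
  have ibp := (lipschitzWith_truncatedWeight y₀ hr.le).integral_lineDeriv_mul_eq (μ := μ)
    hPlip hPc w
  have hweight : ∫ y, lineDeriv ℝ (truncatedWeight y₀ r) y w * P y ∂μ =
      -2 * ∫ y in ball y₀ r, ⟪y - y₀, w⟫ * P y ∂μ := by
    rw [integral_congr_ae ((ae_lineDeriv_truncatedWeight μ hr.ne' w).mono fun y hy ↦ by
      rw [hy, ← indicator_mul_left]), integral_indicator measurableSet_ball,
      ← integral_const_mul]
    simp only [mul_assoc]
  have hfun : ∫ y, lineDeriv ℝ P y (-w) * truncatedWeight y₀ r y ∂μ =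
      -∫ y in ball y₀ r, (r ^ 2 - ‖y - y₀‖ ^ 2) * fderiv ℝ P y w ∂μ := by
    rw [← integral_neg, ← integral_indicator measurableSet_ball]
    congr 1 with y
    rw [(hP.differentiable one_ne_zero y).lineDeriv_eq_fderiv, truncatedWeight_eq_indicator]
    by_cases hy : y ∈ ball y₀ r <;> simp [hy, mul_comm]
  linarith

end TruncatedWeight

section Gradient

variable {E ι : Type*} [NormedAddCommGroup E] [InnerProductSpace ℝ E] [CompleteSpace E]
  [Fintype ι] (b : OrthonormalBasis ι ℝ E) (f : E → ℝ)

theorem OrthonormalBasis.sum_fderiv_apply_sq (y : E) :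
    ∑ i, fderiv ℝ f y (b i) ^ 2 = ‖gradient f y‖ ^ 2 := by
  simp_rw [← inner_gradient_left]
  exact b.sum_sq_inner_left _

theorem OrthonormalBasis.sum_inner_mul_fderiv_apply (x y : E) :
    ∑ i, ⟪x, b i⟫ * fderiv ℝ f y (b i) = ⟪x, gradient f y⟫ := by
  simp_rw [← inner_gradient_left, real_inner_comm _ (gradient f y)]
  exact b.sum_inner_mul_inner x (gradient f y)

end Gradient

theorem fderiv_mul_fderiv_apply_apply {E : Type*} [NormedAddCommGroup E] [NormedSpace ℝ E]
    {u : E → ℝ} {y : E} (hu : DifferentiableAt ℝ u y)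
    (hu' : DifferentiableAt ℝ (fderiv ℝ u) y) (w : E) :
    fderiv ℝ (fun z ↦ u z * fderiv ℝ u z w) y w =
      fderiv ℝ u y w ^ 2 + u y * fderiv ℝ (fderiv ℝ u) y w w := by
  rw [fderiv_fun_mul hu (hu'.clm_apply (differentiableAt_const w)),
    fderiv_clm_apply hu' (differentiableAt_const w)]
  simp only [fderiv_fun_const, Pi.zero_apply, ContinuousLinearMap.comp_zero, zero_add,
    add_apply, smul_apply, ContinuousLinearMap.flip_apply, smul_eq_mul]
  ring

section KeyIdentity

variable {E ι : Type*} [NormedAddCommGroup E] [InnerProductSpace ℝ E] [FiniteDimensional ℝ E]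
  [MeasurableSpace E] [BorelSpace E] (μ : Measure E) [μ.IsAddHaarMeasure] [Fintype ι]
  {y₀ : E} {r : ℝ}

theorem setIntegral_ball_norm_gradient_sq_mul_eq {u : E → ℝ} (hu : ContDiff ℝ 2 u)
    (hsupp : HasCompactSupport u) (b : OrthonormalBasis ι ℝ E) (hr : 0 < r)
    (hΔ : ∀ y ∈ ball y₀ r, ∑ i, fderiv ℝ (fderiv ℝ u) y (b i) (b i) = 0) :
    ∫ y in ball y₀ r, ‖gradient u y‖ ^ 2 * (r ^ 2 - ‖y - y₀‖ ^ 2) ∂μ =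
      2 * ∫ y in ball y₀ r, u y * ⟪y - y₀, gradient u y⟫ ∂μ := by
  have hu1 : ContDiff ℝ 1 (fderiv ℝ u) := hu.fderiv_right (by norm_num)
  have hc := hu.continuous
  have hc1 := hu1.continuous
  have hc2 := hu1.continuous_fderiv one_ne_zero
  have hibp : ∀ i, ∫ y in ball y₀ r, (r ^ 2 - ‖y - y₀‖ ^ 2) *
      (fderiv ℝ u y (b i) ^ 2 + u y * fderiv ℝ (fderiv ℝ u) y (b i) (b i)) ∂μ =
      2 * ∫ y in ball y₀ r, ⟪y - y₀, b i⟫ * (u y * fderiv ℝ u y (b i)) ∂μ := by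
    intro i
    have hP : ContDiff ℝ 1 fun y ↦ u y * fderiv ℝ u y (b i) :=
      (hu.of_le one_le_two).mul (hu1.clm_apply contDiff_const)
    have hderiv : ∀ y, fderiv ℝ (fun z ↦ u z * fderiv ℝ u z (b i)) y (b i) =
        fderiv ℝ u y (b i) ^ 2 + u y * fderiv ℝ (fderiv ℝ u) y (b i) (b i) := fun y ↦
      fderiv_mul_fderiv_apply_apply (hu.differentiable two_ne_zero y)
        (hu1.differentiable one_ne_zero y) (b i)
    simp_rw [← hderiv]
    exact setIntegral_ball_sq_sub_norm_sub_sq_mul_fderiv μ hP hsupp.mul_right hr (b i)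
  calc ∫ y in ball y₀ r, ‖gradient u y‖ ^ 2 * (r ^ 2 - ‖y - y₀‖ ^ 2) ∂μ
      = ∫ y in ball y₀ r, ∑ i, (r ^ 2 - ‖y - y₀‖ ^ 2) *
          (fderiv ℝ u y (b i) ^ 2 + u y * fderiv ℝ (fderiv ℝ u) y (b i) (b i)) ∂μ := by
        refine setIntegral_congr_fun measurableSet_ball fun y hy ↦ ?_
        rw [← Finset.mul_sum, Finset.sum_add_distrib, ← Finset.mul_sum, hΔ y hy,
          b.sum_fderiv_apply_sq]
        ring
    _ = ∑ i, 2 * ∫ y in ball y₀ r, ⟪y - y₀, b i⟫ * (u y * fderiv ℝ u y (b i)) ∂μ := by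
        rw [integral_finsetSum _ fun i _ ↦ Continuous.integrableOn_ball (by fun_prop) _ _]
        exact Finset.sum_congr rfl fun i _ ↦ hibp i
    _ = 2 * ∫ y in ball y₀ r, u y * ⟪y - y₀, gradient u y⟫ ∂μ := by
        rw [← Finset.mul_sum,
          ← integral_finsetSum _ fun i _ ↦ Continuous.integrableOn_ball (by fun_prop) _ _]
        congr 1
        refine integral_congr_ae (ae_of_all _ fun y ↦ ?_)
        dsimp only
        rw [← b.sum_inner_mul_fderiv_apply, Finset.mul_sum]
        exact Finset.sum_congr rfl fun i _ ↦ by ring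

theorem sq_setIntegral_ball_norm_gradient_sq_mul_le {u : E → ℝ} (hu : ContDiff ℝ 2 u)
    (hsupp : HasCompactSupport u) (b : OrthonormalBasis ι ℝ E) (hr : 0 < r)
    (hΔ : ∀ y ∈ ball y₀ r, ∑ i, fderiv ℝ (fderiv ℝ u) y (b i) (b i) = 0) :
    (∫ y in ball y₀ r, ‖gradient u y‖ ^ 2 * (r ^ 2 - ‖y - y₀‖ ^ 2) ∂μ) ^ 2 ≤
      4 * (∫ y in ball y₀ r, ⟪y - y₀, gradient u y⟫ ^ 2 ∂μ) * ∫ y in ball y₀ r, u y ^ 2 ∂μ := by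
  have hc := hu.continuous
  have hgrad : Continuous (gradient u) :=
    (InnerProductSpace.toDual ℝ E).symm.continuous.comp (hu.continuous_fderiv two_ne_zero)
  have hcs := sq_integral_mul_le_integral_sq_mul_integral_sq
    (f := fun y ↦ ⟪y - y₀, gradient u y⟫) (g := u) (μ := μ.restrict (ball y₀ r))
    (Continuous.integrableOn_ball (by fun_prop) _ _)
    (Continuous.integrableOn_ball (by fun_prop) _ _)
    (Continuous.integrableOn_ball (by fun_prop) _ _)
  rw [setIntegral_ball_norm_gradient_sq_mul_eq μ hu hsupp b hr hΔ]
  simp_rw [mul_comm (u _)]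
  linarith

end KeyIdentity

theorem exists_contDiff_hasCompactSupport_eventuallyEq_nhdsSet_closedBall {E : Type*}
    [NormedAddCommGroup E] [NormedSpace ℝ E] [FiniteDimensional ℝ E] {D : Set E}
    (hD : IsOpen D) {y₀ : E} {r : ℝ} (hr : 0 ≤ r) (hball : closedBall y₀ r ⊆ D) {n : ℕ∞}
    {v : E → ℝ} (hv : ContDiffOn ℝ n v D) :
    ∃ u : E → ℝ, ContDiff ℝ n u ∧ HasCompactSupport u ∧ u =ᶠ[𝓝ˢ (closedBall y₀ r)] v := by
  obtain ⟨δ, hδ, hδD⟩ := (isCompact_closedBall y₀ r).exists_cthickening_subset_open hD hball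
  rw [cthickening_closedBall hδ.le hr] at hδD
  let χ : ContDiffBump y₀ := ⟨r + δ / 2, δ + r, by positivity, by linarith⟩
  refine ⟨fun y ↦ χ y * v y, contDiff_iff_contDiffAt.mpr fun y ↦ ?_,
    χ.hasCompactSupport.mul_right, ?_⟩
  · by_cases hy : y ∈ tsupport χ
    · rw [χ.tsupport_eq] at hy
      exact χ.contDiffAt.mul (hv.contDiffAt (hD.mem_nhds (hδD hy)))
    · exact contDiffAt_const.congr_of_eventuallyEq
        (notMem_tsupport_iff_eventuallyEq.mp fun h ↦ hy (tsupport_mul_subset_left h))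
  · have hnhds : ball y₀ χ.rIn ∈ 𝓝ˢ (closedBall y₀ r) :=
      isOpen_ball.mem_nhdsSet.mpr (closedBall_subset_ball (show r < r + δ / 2 by linarith))
    filter_upwards [hnhds] with y hy
    simp [χ.one_of_mem_closedBall (ball_subset_closedBall hy)]

theorem stmt_12_general (N : ℕ)
    (D : Set (EuclideanSpace ℝ (Fin (N + 1)))) (hDo : IsOpen D)
    (y₀ : EuclideanSpace ℝ (Fin (N + 1))) (r : ℝ) (hr : 0 < r)
    (hball : Metric.closedBall y₀ r ⊆ D)
    (v : EuclideanSpace ℝ (Fin (N + 1)) → ℝ) (hv : ContDiffOn ℝ 2 v D)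
    (hharm : ∀ y ∈ D, euclideanLaplacian v y = 0) :
    (∫ y in Metric.ball y₀ r, ‖gradient v y‖ ^ 2 * (r ^ 2 - ‖y - y₀‖ ^ 2)) ^ 2 ≤
      4 * (∫ y in Metric.ball y₀ r, (inner ℝ (y - y₀) (gradient v y) : ℝ) ^ 2) *
        ∫ y in Metric.ball y₀ r, (v y) ^ 2 := by
  obtain ⟨u, hu, hsupp, huv⟩ :=
    exists_contDiff_hasCompactSupport_eventuallyEq_nhdsSet_closedBall hDo hr.le hball (n := 2) hv
  have hnear : ∀ y ∈ ball y₀ r, u =ᶠ[𝓝 y] v := fun y hy ↦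
    huv.filter_mono (nhds_le_nhdsSet (ball_subset_closedBall hy))
  have hgrad : ∀ y ∈ ball y₀ r, gradient u y = gradient v y := fun y hy ↦ by
    rw [gradient, gradient, (hnear y hy).fderiv_eq]
  have hΔ : ∀ y ∈ ball y₀ r, ∑ i, fderiv ℝ (fderiv ℝ u) y (EuclideanSpace.basisFun _ ℝ i)
      (EuclideanSpace.basisFun _ ℝ i) = 0 := fun y hy ↦ by
    simpa [(hnear y hy).fderiv.fderiv_eq, euclideanLaplacian, iteratedFDeriv_two_apply] using
      hharm y (hball (ball_subset_closedBall hy))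
  have key := sq_setIntegral_ball_norm_gradient_sq_mul_le volume hu hsupp
    (EuclideanSpace.basisFun _ ℝ) hr hΔ
  convert key using 2
  · exact setIntegral_congr_fun measurableSet_ball fun y hy ↦ by rw [hgrad y hy]
  · congr 1
    exact setIntegral_congr_fun measurableSet_ball fun y hy ↦ by rw [hgrad y hy]
  · exact setIntegral_congr_fun measurableSet_ball fun y hy ↦ by rw [(hnear y hy).eq_of_nhds]

theorem stmt_12 (N : ℕ) (hN : 1 ≤ N)
    (D : Set (EuclideanSpace ℝ (Fin (N + 1)))) (hDo : IsOpen D)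
    (hDb : Bornology.IsBounded D)
    (y₀ : EuclideanSpace ℝ (Fin (N + 1))) (r : ℝ) (hr : 0 < r)
    (hball : Metric.closedBall y₀ r ⊆ D)
    (v : EuclideanSpace ℝ (Fin (N + 1)) → ℝ) (hv : ContDiffOn ℝ 2 v D)
    (hharm : ∀ y ∈ D, euclideanLaplacian v y = 0) :
    (∫ y in Metric.ball y₀ r, ‖gradient v y‖ ^ 2 * (r ^ 2 - ‖y - y₀‖ ^ 2)) ^ 2 ≤
      4 * (∫ y in Metric.ball y₀ r, (inner ℝ (y - y₀) (gradient v y) : ℝ) ^ 2) *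
        ∫ y in Metric.ball y₀ r, (v y) ^ 2 :=
  stmt_12_general N D hDo y₀ r hr hball v hv hharm
end
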